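/- arXiv:2009.00445 — 5 statements merged into one kernel-verified Lean document; each statement's English description precedes it below -/
import Mathlib

section
/- Let Θ be a nonnegative random variable such that E[e^{ζΘ}] < ∞ for some ζ > 0. Then for every t with |t| ≤ ζ/2, E[e^{tΘ}] ≤ 1 + E[Θ] t + (1/2) E[Θ⁴]^{1/2} E[e^{ζΘ}]^{1/2} t². -/
/-!
Taylor's theorem with Lagrange remainder gives `exp x ≤ 1 + x + x² / 2 · exp |x|`, so for
`|t| ≤ ζ / 2` and `Θ ≥ 0` the second-order term is at most `t² / 2 · Θ² exp (ζ Θ / 2)`.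
Taking expectations and applying Cauchy–Schwarz to `Θ² · exp (ζ Θ / 2)` bounds its mean by
`√E[Θ⁴] · √E[exp (ζ Θ)]`.
-/

open MeasureTheory ProbabilityTheory Real

theorem Real.exp_le_one_add_add_sq_div_two_mul_exp_abs (x : ℝ) :
    exp x ≤ 1 + x + x ^ 2 / 2 * exp |x| := by
  rcases eq_or_ne 0 x with rfl | hx
  · simp
  obtain ⟨ξ, hξ, hlagrange⟩ := taylor_mean_remainder_lagrange_iteratedDeriv hx
    (f := exp) (n := 1) contDiff_exp.contDiffOn
  have hderiv : derivWithin exp (Set.uIcc 0 x) 0 = 1 := by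
    simpa using (hasDerivAt_exp 0).hasDerivWithinAt.derivWithin
      (uniqueDiffOn_uIcc hx 0 Set.left_mem_uIcc)
  have hξx : ξ ≤ |x| := hξ.2.le.trans (max_le (abs_nonneg x) (le_abs_self x))
  have htaylor : exp x - (1 + x) = exp ξ * x ^ 2 / 2 := by
    rw [taylor_within_apply] at hlagrange
    norm_num [Finset.sum_range_succ, hderiv, iteratedDeriv_eq_iterate, iter_deriv_exp]
      at hlagrange
    exact hlagrange
  nlinarith [exp_le_exp.2 hξx, sq_nonneg x, htaylor]

theorem Real.exp_mul_le_of_abs_le {θ t s : ℝ} (hθ : 0 ≤ θ) (hts : |t| ≤ s) :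
    exp (t * θ) ≤ 1 + t * θ + t ^ 2 / 2 * (θ ^ 2 * exp (s * θ)) := by
  have hexp : exp |t * θ| ≤ exp (s * θ) := by
    rw [exp_le_exp, abs_mul, abs_of_nonneg hθ]
    exact mul_le_mul_of_nonneg_right hts hθ
  calc exp (t * θ) ≤ 1 + t * θ + (t * θ) ^ 2 / 2 * exp |t * θ| :=
        exp_le_one_add_add_sq_div_two_mul_exp_abs _
    _ ≤ 1 + t * θ + (t * θ) ^ 2 / 2 * exp (s * θ) := by gcongr
    _ = 1 + t * θ + t ^ 2 / 2 * (θ ^ 2 * exp (s * θ)) := by ring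

namespace MeasureTheory

variable {α : Type*} [MeasurableSpace α] {μ : Measure α}

theorem integral_mul_le_sqrt_integral_sq_mul_sqrt_integral_sq {f g : α → ℝ}
    (hf_nonneg : 0 ≤ᵐ[μ] f) (hg_nonneg : 0 ≤ᵐ[μ] g) (hf : MemLp f 2 μ) (hg : MemLp g 2 μ) :
    ∫ a, f a * g a ∂μ ≤ √(∫ a, f a ^ 2 ∂μ) * √(∫ a, g a ^ 2 ∂μ) := by
  have holder := integral_mul_le_Lp_mul_Lq_of_nonneg Real.HolderConjugate.two_two
    hf_nonneg hg_nonneg (by simpa using hf) (by simpa using hg)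
  simpa only [Real.rpow_two, ← Real.sqrt_eq_rpow] using holder

end MeasureTheory

namespace ProbabilityTheory

variable {Ω : Type*} [MeasurableSpace Ω] {μ : Measure Ω} {X : Ω → ℝ} {t u : ℝ}

theorem integrable_exp_mul_of_le_of_nonneg (hX : 0 ≤ᵐ[μ] X) (hu : u ≠ 0)
    (hint : Integrable (fun ω ↦ exp (u * X ω)) μ) (htu : t ≤ u) :
    Integrable (fun ω ↦ exp (t * X ω)) μ := by
  have hXm : AEMeasurable X μ := aemeasurable_of_aemeasurable_exp_mul hu hint.aemeasurable
  refine hint.mono' (measurable_exp.comp_aemeasurable (hXm.const_mul t)).aestronglyMeasurable ?_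
  filter_upwards [hX] with ω hω
  rw [norm_of_nonneg (exp_pos _).le, exp_le_exp]
  exact mul_le_mul_of_nonneg_right htu hω

theorem integral_sq_mul_exp_half_mul_le (hX : 0 ≤ᵐ[μ] X) (hu : 0 < u)
    (hint : Integrable (fun ω ↦ exp (u * X ω)) μ) :
    ∫ ω, X ω ^ 2 * exp (u / 2 * X ω) ∂μ ≤ √(∫ ω, X ω ^ 4 ∂μ) * √(∫ ω, exp (u * X ω) ∂μ) := by
  have hint_neg : Integrable (fun ω ↦ exp (-u * X ω)) μ :=
    integrable_exp_mul_of_le_of_nonneg hX hu.ne' hint (by linarith)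
  have hexp_sq : ∀ ω, exp (u / 2 * X ω) ^ 2 = exp (u * X ω) := fun ω ↦ by
    rw [← exp_nat_mul]; ring_nf
  have hXm : AEMeasurable X μ := aemeasurable_of_aemeasurable_exp_mul hu.ne' hint.aemeasurable
  have hsq : MemLp (fun ω ↦ X ω ^ 2) 2 μ := by
    refine (memLp_two_iff_integrable_sq (hXm.pow_const 2).aestronglyMeasurable).2 ?_
    simpa only [← pow_mul] using integrable_pow_of_integrable_exp_mul hu.ne' hint hint_neg 4
  have hexp : MemLp (fun ω ↦ exp (u / 2 * X ω)) 2 μ := by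
    refine (memLp_two_iff_integrable_sq
      (measurable_exp.comp_aemeasurable (hXm.const_mul _)).aestronglyMeasurable).2 ?_
    exact hint.congr (ae_of_all _ fun ω ↦ (hexp_sq ω).symm)
  have hcs := integral_mul_le_sqrt_integral_sq_mul_sqrt_integral_sq
    (ae_of_all _ fun ω ↦ sq_nonneg (X ω)) (ae_of_all _ fun ω ↦ (exp_pos _).le) hsq hexp
  simpa only [← pow_mul, hexp_sq] using hcs

end ProbabilityTheory

theorem stmt3_general {Ω : Type*} [MeasureSpace Ω] [IsProbabilityMeasure (ℙ : Measure Ω)]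
    (Θ : Ω → ℝ) (hnn : ∀ ω, 0 ≤ Θ ω)
    (ζ : ℝ) (hζ : 0 < ζ)
    (hint : Integrable (fun ω => Real.exp (ζ * Θ ω))) :
    ∀ t : ℝ, |t| ≤ ζ / 2 →
      (∫ ω, Real.exp (t * Θ ω)) ≤
        1 + (∫ ω, Θ ω) * t
          + (1 / 2) * Real.sqrt (∫ ω, (Θ ω) ^ 4)
              * Real.sqrt (∫ ω, Real.exp (ζ * Θ ω)) * t ^ 2 := by
  intro t ht
  have hΘ : 0 ≤ᵐ[ℙ] Θ := ae_of_all _ hnn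
  have hint_neg : Integrable (fun ω ↦ exp (-ζ * Θ ω)) :=
    integrable_exp_mul_of_le_of_nonneg hΘ hζ.ne' hint (by linarith)
  have hint_Θ : Integrable Θ := by
    simpa using integrable_pow_of_integrable_exp_mul hζ.ne' hint hint_neg 1
  have hint_rem : Integrable (fun ω ↦ Θ ω ^ 2 * exp (ζ / 2 * Θ ω)) :=
    integrable_pow_mul_exp_of_integrable_exp_mul (t := ζ / 2) (by positivity)
      (by simpa only [add_halves] using hint) (by simp) 2
  have hint_exp : Integrable (fun ω ↦ exp (t * Θ ω)) :=
    integrable_exp_mul_of_le_of_nonneg hΘ hζ.ne' hint (by linarith [le_abs_self t])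
  have hint_quad : Integrable (fun ω ↦ 1 + t * Θ ω) := (integrable_const 1).add (hint_Θ.const_mul t)
  calc ∫ ω, exp (t * Θ ω)
      ≤ ∫ ω, (1 + t * Θ ω + t ^ 2 / 2 * (Θ ω ^ 2 * exp (ζ / 2 * Θ ω))) :=
        integral_mono hint_exp (hint_quad.add (hint_rem.const_mul _))
          fun ω ↦ exp_mul_le_of_abs_le (hnn ω) ht
    _ = 1 + t * (∫ ω, Θ ω) + t ^ 2 / 2 * ∫ ω, Θ ω ^ 2 * exp (ζ / 2 * Θ ω) := by
        rw [integral_add hint_quad (hint_rem.const_mul _), integral_add (integrable_const 1)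
          (hint_Θ.const_mul t), integral_const, integral_const_mul, integral_const_mul]
        simp
    _ ≤ 1 + t * (∫ ω, Θ ω) + t ^ 2 / 2 * (√(∫ ω, Θ ω ^ 4) * √(∫ ω, exp (ζ * Θ ω))) := by
        gcongr
        exact integral_sq_mul_exp_half_mul_le hΘ hζ hint
    _ = _ := by ring

/-- Taylor-type bound on the m.g.f. of a nonnegative random variable. -/
theorem stmt3 {Ω : Type*} [MeasureSpace Ω] [IsProbabilityMeasure (ℙ : Measure Ω)]
    (Θ : Ω → ℝ) (hmeas : Measurable Θ) (hnn : ∀ ω, 0 ≤ Θ ω)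
    (ζ : ℝ) (hζ : 0 < ζ)
    (hint : Integrable (fun ω => Real.exp (ζ * Θ ω))) :
    ∀ t : ℝ, |t| ≤ ζ / 2 →
      (∫ ω, Real.exp (t * Θ ω)) ≤
        1 + (∫ ω, Θ ω) * t
          + (1 / 2) * Real.sqrt (∫ ω, (Θ ω) ^ 4)
              * Real.sqrt (∫ ω, Real.exp (ζ * Θ ω)) * t ^ 2 :=
  stmt3_general Θ hnn ζ hζ hint
end

section
/- With the matrices M_1, …, M_I defined stage-wise as follows: M_i has p(i)-th row with entry 1−r_i in position p(i) and r_i ρ_k (1+α)/(1−ρ_{p(i)}) in position k ≠ p(i), and unit-vector rows elsewhere, where ρ_k + (1+α)∑_{ℓ≠k}ρ_ℓ < 1 for all k. Then for every k, the k-th row sum of any product M_{i_ℓ} ⋯ M_{i_1} is at most 1; and if some stage i_j with p(i_j) = k and r_{i_j} > 0 appears among i_1, …, i_ℓ, the k-th row sum is strictly less than 1. -/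
open Finset

/-!
Every `M i` is the identity with row `p i` replaced by a nonnegative row of sum
`1 - r i * (1 - c)`, where `c = (1 + α) ∑_{ℓ ≠ p i} ρ ℓ / (1 - ρ (p i)) < 1` by the slack condition.
So all `M i` are row-substochastic, and these matrices form a monoid. Reading
`M_{i_ℓ} ⋯ M_{i_1}` from the left, row `k` of each factor is either the `k`-th unit row, so that
row `k` of the product is row `k` of the remaining product, or has sum below one, and then so does
row `k` of the product, because the remaining factors are substochastic.
-/

namespace Matrix

variable {R n : Type*} [Fintype n] [Semiring R]

theorem sum_mul_apply_eq_sum_mul_sum_row (A B : Matrix n n R) (i : n) :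
    ∑ j, (A * B) i j = ∑ m, A i m * ∑ j, B m j := by
  simp only [mul_apply, mul_sum]
  exact sum_comm

theorem mul_row_eq_of_row_eq_single [DecidableEq n] {A : Matrix n n R} {i : n}
    (hA : A i = Pi.single i 1) (B : Matrix n n R) : (A * B) i = B i := by
  ext j
  simp [mul_apply, hA, Pi.single_apply]

variable [DecidableEq n] [PartialOrder R] [IsOrderedRing R]

def rowSubstochastic (R n : Type*) [Fintype n] [DecidableEq n] [Semiring R] [PartialOrder R]
    [IsOrderedRing R] : Submonoid (Matrix n n R) where
  carrier := {M | (∀ i j, 0 ≤ M i j) ∧ ∀ i, ∑ j, M i j ≤ 1}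
  mul_mem' {A B} hA hB := by
    refine ⟨fun i j => sum_nonneg fun m _ => mul_nonneg (hA.1 i m) (hB.1 m j), fun i => ?_⟩
    rw [sum_mul_apply_eq_sum_mul_sum_row]
    exact (sum_le_sum fun m _ => mul_le_of_le_one_right (hA.1 i m) (hB.2 m)).trans (hA.2 i)
  one_mem' := by
    refine ⟨fun i j => ?_, fun i => by simp [one_apply]⟩
    rw [one_apply]
    split_ifs <;> simp

theorem sum_mul_apply_lt_one {A B : Matrix n n R} (hA : A ∈ rowSubstochastic R n)
    (hB : B ∈ rowSubstochastic R n) {i : n} (hi : ∑ j, A i j < 1) : ∑ j, (A * B) i j < 1 := by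
  rw [sum_mul_apply_eq_sum_mul_sum_row]
  exact (sum_le_sum fun m _ => mul_le_of_le_one_right (hA.1 i m) (hB.2 m)).trans_lt hi

theorem updateRow_one_mem_rowSubstochastic {b : n → R} (hb : ∀ j, 0 ≤ b j) (hsum : ∑ j, b j ≤ 1)
    (i : n) : updateRow 1 i b ∈ rowSubstochastic R n := by
  have hone := (rowSubstochastic R n).one_mem
  refine ⟨fun k j => ?_, fun k => ?_⟩
  · rw [updateRow_apply]
    split_ifs
    exacts [hb j, hone.1 k j]
  · by_cases hk : k = i
    · simpa [hk] using hsum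
    · simpa [hk] using hone.2 k

theorem sum_list_prod_apply_lt_one {L : List (Matrix n n R)}
    (hL : ∀ A ∈ L, A ∈ rowSubstochastic R n) {i : n}
    (hrow : ∀ A ∈ L, A i = Pi.single i 1 ∨ ∑ j, A i j < 1) (hlt : ∃ A ∈ L, ∑ j, A i j < 1) :
    ∑ j, L.prod i j < 1 := by
  induction L with
  | nil => simp at hlt
  | cons A L ih =>
    simp only [List.mem_cons, forall_eq_or_imp] at hL hrow
    rw [List.prod_cons]
    rcases hrow.1 with hunit | hA
    · obtain ⟨B, hB, hBlt⟩ := hlt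
      rcases List.mem_cons.1 hB with rfl | hB
      · simp [hunit] at hBlt
      · rw [mul_row_eq_of_row_eq_single hunit]
        exact ih hL.2 hrow.2 ⟨B, hB, hBlt⟩
    · exact sum_mul_apply_lt_one hL.1 (Submonoid.list_prod_mem _ hL.2) hA

end Matrix

open Matrix

section StageMatrix

variable {K ι : Type*} [DecidableEq K] (p : ι → K) (r : ι → ℝ) (ρ : K → ℝ) (α : ℝ)

noncomputable def loadRatio [Fintype K] (k : K) : ℝ :=
  (1 + α) * (∑ ℓ ∈ univ.erase k, ρ ℓ) / (1 - ρ k)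

noncomputable def servedRow (i : ι) (j : K) : ℝ :=
  if j = p i then 1 - r i else r i * ρ j * (1 + α) / (1 - ρ (p i))

noncomputable def stageMatrix (i : ι) : Matrix K K ℝ :=
  updateRow 1 (p i) (servedRow p r ρ α i)

variable {p r ρ α}

theorem stageMatrix_row_of_ne {i : ι} {k : K} (hk : k ≠ p i) :
    stageMatrix p r ρ α i k = Pi.single k 1 := by
  ext j
  simp [stageMatrix, hk, one_apply, Pi.single_apply, eq_comm]

theorem stageMatrix_row_of_eq_zero {i : ι} (hri : r i = 0) (k : K) :
    stageMatrix p r ρ α i k = Pi.single k 1 := by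
  rcases eq_or_ne k (p i) with rfl | hk
  · ext j
    by_cases hj : j = p i <;> simp [stageMatrix, servedRow, hri, hj]
  · exact stageMatrix_row_of_ne hk

variable [Fintype K]

theorem loadRatio_lt_one (hρ : ∀ k, ρ k < 1)
    (hslack : ∀ k, ρ k + (1 + α) * ∑ ℓ ∈ univ.erase k, ρ ℓ < 1) (k : K) :
    loadRatio ρ α k < 1 := by
  rw [loadRatio, div_lt_one (sub_pos.2 (hρ k))]
  linarith [hslack k]

theorem sum_servedRow (i : ι) :
    ∑ j, servedRow p r ρ α i j = 1 - r i * (1 - loadRatio ρ α (p i)) := by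
  rw [← add_sum_erase _ _ (mem_univ (p i)), servedRow, if_pos rfl,
    sum_congr rfl fun j hj => by rw [servedRow, if_neg (ne_of_mem_erase hj)], loadRatio]
  rw [← sum_div, ← sum_mul, ← mul_sum]
  ring

theorem stageMatrix_mem_rowSubstochastic (hρ : ∀ k, 0 ≤ ρ k ∧ ρ k < 1) (hα : 0 ≤ 1 + α)
    (hslack : ∀ k, ρ k + (1 + α) * ∑ ℓ ∈ univ.erase k, ρ ℓ < 1) (hr : ∀ i, 0 ≤ r i ∧ r i ≤ 1)
    (i : ι) : stageMatrix p r ρ α i ∈ rowSubstochastic ℝ K := by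
  refine updateRow_one_mem_rowSubstochastic (fun j => ?_) ?_ (p i)
  · rw [servedRow]
    split_ifs
    · linarith [(hr i).2]
    · have := (hρ (p i)).2
      have := (hρ j).1
      have := (hr i).1
      positivity
  · rw [sum_servedRow]
    have := loadRatio_lt_one (fun k => (hρ k).2) hslack (p i)
    nlinarith [(hr i).1]

theorem sum_stageMatrix_served_row_lt_one (hρ : ∀ k, ρ k < 1)
    (hslack : ∀ k, ρ k + (1 + α) * ∑ ℓ ∈ univ.erase k, ρ ℓ < 1) {i : ι} (hri : 0 < r i) :
    ∑ j, stageMatrix p r ρ α i (p i) j < 1 := by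
  simp only [stageMatrix, updateRow_self, sum_servedRow]
  have := loadRatio_lt_one hρ hslack (p i)
  nlinarith

theorem stageMatrix_row_eq_single_or_sum_lt_one (hρ : ∀ k, ρ k < 1)
    (hslack : ∀ k, ρ k + (1 + α) * ∑ ℓ ∈ univ.erase k, ρ ℓ < 1) (hr : ∀ i, 0 ≤ r i)
    (i : ι) (k : K) :
    stageMatrix p r ρ α i k = Pi.single k 1 ∨ ∑ j, stageMatrix p r ρ α i k j < 1 := by
  rcases eq_or_ne k (p i) with rfl | hk
  · rcases (hr i).eq_or_lt with hri | hri
    · exact .inl (stageMatrix_row_of_eq_zero hri.symm _)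
    · exact .inr (sum_stageMatrix_served_row_lt_one hρ hslack hri)
  · exact .inl (stageMatrix_row_of_ne hk)

end StageMatrix

theorem stmt10_general {K ι : Type*} [Fintype K] [DecidableEq K]
    (pfun : ι → K) (r : ι → ℝ) (ρ : K → ℝ) (α : ℝ)
    (hρ : ∀ k, 0 < ρ k ∧ ρ k < 1) (hα : 0 < α)
    (hslack : ∀ k, ρ k + (1 + α) * ∑ ℓ ∈ Finset.univ.erase k, ρ ℓ < 1)
    (hr : ∀ i, 0 ≤ r i ∧ r i ≤ 1)
    (M : ι → Matrix K K ℝ)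
    (hM : ∀ i k j, M i k j =
      if k = pfun i then
        (if j = pfun i then 1 - r i else r i * ρ j * (1 + α) / (1 - ρ (pfun i)))
      else (if j = k then 1 else 0)) :
    ∀ (l : List ι) (k : K),
      (∑ j, (l.reverse.map M).prod k j ≤ 1) ∧
      ((∃ i ∈ l, pfun i = k ∧ 0 < r i) → ∑ j, (l.reverse.map M).prod k j < 1) := by
  obtain rfl : M = stageMatrix pfun r ρ α := by
    ext i k j
    rw [hM, stageMatrix, updateRow_apply, one_apply, servedRow]
    exact if_congr Iff.rfl rfl (if_congr eq_comm rfl rfl)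
  have hρ1 : ∀ k, ρ k < 1 := fun k => (hρ k).2
  intro l k
  have hsub : ∀ A ∈ l.reverse.map (stageMatrix pfun r ρ α), A ∈ rowSubstochastic ℝ K := by
    intro A hA
    obtain ⟨i, -, rfl⟩ := List.mem_map.1 hA
    exact stageMatrix_mem_rowSubstochastic (fun k => ⟨(hρ k).1.le, hρ1 k⟩) (by linarith)
      hslack hr i
  refine ⟨(Submonoid.list_prod_mem _ hsub).2 k, fun ⟨i, hi, hik, hri⟩ => ?_⟩
  have hserved : ∑ j, stageMatrix pfun r ρ α i k j < 1 :=
    hik ▸ sum_stageMatrix_served_row_lt_one hρ1 hslack hri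
  refine sum_list_prod_apply_lt_one hsub (fun A hA => ?_)
    ⟨_, List.mem_map_of_mem (List.mem_reverse.2 hi), hserved⟩
  obtain ⟨i', -, rfl⟩ := List.mem_map.1 hA
  exact stageMatrix_row_eq_single_or_sum_lt_one hρ1 hslack (fun i => (hr i).1) i' k

/-- Row sums of stage-wise products: products of the buffer-occupancy matrices have
row sums at most 1, and the k-th row sum is strictly below 1 once a stage serving
queue k with positive service ratio has appeared in the product. -/
theorem stmt10 {K ι : Type*} [Fintype K] [DecidableEq K] [Fintype ι]
    (pfun : ι → K) (r : ι → ℝ) (ρ : K → ℝ) (α : ℝ)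
    (hρ : ∀ k, 0 < ρ k ∧ ρ k < 1) (hsum : ∑ k, ρ k < 1) (hα : 0 < α)
    (hslack : ∀ k, ρ k + (1 + α) * ∑ ℓ ∈ Finset.univ.erase k, ρ ℓ < 1)
    (hr : ∀ i, 0 ≤ r i ∧ r i ≤ 1)
    (hcover : ∀ k, 0 < ∑ i ∈ Finset.univ.filter (fun i => pfun i = k), r i)
    (M : ι → Matrix K K ℝ)
    (hM : ∀ i k j, M i k j =
      if k = pfun i then
        (if j = pfun i then 1 - r i else r i * ρ j * (1 + α) / (1 - ρ (pfun i)))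
      else (if j = k then 1 else 0)) :
    ∀ (l : List ι) (k : K),
      (∑ j, (l.reverse.map M).prod k j ≤ 1) ∧
      ((∃ i ∈ l, pfun i = k ∧ 0 < r i) → ∑ j, (l.reverse.map M).prod k j < 1) :=
  stmt10_general pfun r ρ α hρ hα hslack hr M hM
end

section
/- For the cyclic polling system (I = K, p(i) = i) under the binomial-exhaustive policy with parameters r_k ∈ (0,1], arrival rates λ_k > 0, service rates μ_k with ρ_k = λ_k/μ_k, ρ = ∑ρ_k < 1, and mean switchover times s_k ≥ 0 with s = ∑ s_k > 0, the vector q with q_k(a_k) = λ_k(1−ρ_k) s / (r_k (1−ρ)) and, for j ≠ k, q_j(a_k) = λ_j( (1−ρ_j) s /(r_j(1−ρ)) − ∑_{ℓ=k}^{j−1} s_ℓ − (s/(1−ρ)) ∑_{ℓ=k}^{j−1} ρ_ℓ ) (indices mod K) satisfies the first-order buffer occupancy equations: q_k(a_{k+1}) = s_k λ_k + (1−r_k) q_k(a_k) for the polled queue, and q_j(a_{k+1}) = s_k λ_j + q_j(a_k) + q_k(a_k) r_k λ_j / (μ_k(1−ρ_k)) for j ≠ k. -/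
open Finset

lemma sum_zmod {K : ℕ} [NeZero K] (f : ZMod K → ℝ) (a : ZMod K) :
    ∑ m ∈ range K, f (a + (m : ZMod K)) = ∑ x, f x := by
  rw [← Fin.sum_univ_eq_sum_range (fun m => f (a + (m : ZMod K))) K]
  refine Fintype.sum_bijective (fun m : Fin K => a + (m : ZMod K)) ?_ _ _ (fun m => rfl)
  have : Function.Bijective (fun m : Fin K => ((m : ℕ) : ZMod K)) := by
    rw [Fintype.bijective_iff_injective_and_card]
    constructor
    · intro x y h
      simpa [ZMod.val_natCast_of_lt x.2, ZMod.val_natCast_of_lt y.2, Fin.ext_iff] using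
        congrArg ZMod.val h
    · simp [ZMod.card]
  exact (Equiv.addLeft a).bijective.comp this

lemma zmod_val_sub_one {K : ℕ} [NeZero K] (x : ZMod K) (hx : x ≠ 0) :
    (x - 1).val = x.val - 1 := by
  have h1 : 1 ≤ x.val := Nat.one_le_iff_ne_zero.mpr (by simpa [ZMod.val_eq_zero] using hx)
  have h2 : x.val - 1 < K := lt_of_le_of_lt (Nat.sub_le _ _) (ZMod.val_lt x)
  have : x - 1 = ((x.val - 1 : ℕ) : ZMod K) := by
    push_cast [Nat.cast_sub h1]
    rw [ZMod.natCast_val, ZMod.cast_id]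
  rw [this, ZMod.val_natCast_of_lt h2]

lemma zmod_val_neg_one (K : ℕ) [NeZero K] : (-1 : ZMod K).val = K - 1 := by
  cases K with
  | zero => exact absurd rfl (NeZero.ne 0)
  | succ n => simpa using ZMod.val_neg_one n

lemma sum_pred {K : ℕ} [NeZero K] (f : ZMod K → ℝ) (k : ZMod K) :
    ∑ m ∈ range (K - 1), f (k + 1 + (m : ZMod K)) = (∑ x, f x) - f k := by
  have hK : 1 ≤ K := Nat.one_le_iff_ne_zero.mpr (NeZero.ne K)
  have this : ∑ m ∈ range ((K - 1) + 1), f (k + 1 + (m : ZMod K)) = ∑ x, f x := by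
    rw [show K - 1 + 1 = K by omega]; exact sum_zmod f (k + 1)
  rw [sum_range_succ] at this
  have hlast : k + 1 + ((K - 1 : ℕ) : ZMod K) = k := by
    push_cast [Nat.cast_sub hK]
    simp
  rw [hlast] at this
  linarith

lemma sum_shift {K : ℕ} [NeZero K] (f : ZMod K → ℝ) (k : ZMod K) (v : ℕ) (hv : 1 ≤ v) :
    ∑ m ∈ range v, f (k + (m : ZMod K)) =
      f k + ∑ m ∈ range (v - 1), f (k + 1 + (m : ZMod K)) := by
  rw [show v = (v - 1) + 1 from (Nat.succ_pred_eq_of_pos hv).symm, sum_range_succ']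
  have : ∀ m : ℕ, k + ((m + 1 : ℕ) : ZMod K) = k + 1 + (m : ZMod K) := by
    intro m; push_cast; ring
  simp only [this, Nat.cast_zero, add_zero, Nat.add_sub_cancel]
  ring

/-- The explicit closed-form vector satisfies the first-order buffer occupancy
equations for a cyclic polling system under the binomial-exhaustive policy. -/
theorem stmt12 (K : ℕ) [NeZero K]
    (lam mu s r ρ : ZMod K → ℝ)
    (hlam : ∀ k, 0 < lam k) (hmu : ∀ k, lam k < mu k)
    (hρdef : ∀ k, ρ k = lam k / mu k)
    (hr : ∀ k, 0 < r k ∧ r k ≤ 1)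
    (hs : ∀ k, 0 ≤ s k) (hstot : 0 < ∑ k, s k)
    (hρtot : ∑ k, ρ k < 1)
    (q : ZMod K → ZMod K → ℝ)
    (hq1 : ∀ k, q k k = lam k * (1 - ρ k) * (∑ ℓ, s ℓ) / (r k * (1 - ∑ ℓ, ρ ℓ)))
    (hq2 : ∀ j k, j ≠ k → q j k =
      lam j * ((1 - ρ j) * (∑ ℓ, s ℓ) / (r j * (1 - ∑ ℓ, ρ ℓ))
        - (∑ m ∈ Finset.range ((j - k).val), s (k + (m : ZMod K)))
        - ((∑ ℓ, s ℓ) / (1 - ∑ ℓ, ρ ℓ))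
            * ∑ m ∈ Finset.range ((j - k).val), ρ (k + (m : ZMod K)))) :
    (∀ k, q k (k + 1) = s k * lam k + (1 - r k) * q k k) ∧
    (∀ j k, j ≠ k →
      q j (k + 1) = s k * lam j + q j k + q k k * r k * lam j / (mu k * (1 - ρ k))) := by
  have hmupos : ∀ k, 0 < mu k := fun k => (hlam k).trans (hmu k)
  have hρlt : ∀ k, ρ k < 1 := fun k => by
    rw [hρdef k]; exact (div_lt_one (hmupos k)).mpr (hmu k)
  have hP : (1 : ℝ) - ∑ ℓ, ρ ℓ ≠ 0 := by linarith
  have hlamr : ∀ k, lam k = ρ k * mu k := fun k => by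
    rw [hρdef k, div_mul_cancel₀ _ (hmupos k).ne']
  constructor
  · intro k
    by_cases h1 : (1 : ZMod K) = 0
    · -- K = 1
      have hK1 : K = 1 := by
        exact Nat.dvd_one.mp ((ZMod.natCast_eq_zero_iff 1 K).mp (by exact_mod_cast h1))
      subst hK1
      have hk1 : k + 1 = k := by rw [h1, add_zero]
      have hsum : (∑ ℓ, s ℓ) = s k := Fintype.sum_subsingleton s k
      have hsumρ : (∑ ℓ, ρ ℓ) = ρ k := Fintype.sum_subsingleton ρ k
      rw [hk1, hq1 k, hsum, hsumρ]
      have hrk := (hr k).1.ne'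
      have hρk : (1 : ℝ) - ρ k ≠ 0 := by have := hρlt k; linarith
      field_simp
      ring
    · -- K ≥ 2
      have hne : k ≠ k + 1 := fun h => h1 (by linear_combination -h)
      rw [hq2 k (k + 1) hne]
      have hval : (k - (k + 1)).val = K - 1 := by
        rw [show k - (k + 1) = -1 by ring, zmod_val_neg_one]
      rw [hval, sum_pred s k, sum_pred ρ k, hq1 k]
      have hrk := (hr k).1.ne'
      field_simp
      ring
  · intro j k hjk
    have hjk' : j - k ≠ 0 := sub_ne_zero.mpr hjk
    have hv1 : 1 ≤ (j - k).val := Nat.one_le_iff_ne_zero.mpr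
      (by simpa [ZMod.val_eq_zero] using hjk')
    have hqkk : q k k * r k * lam j / (mu k * (1 - ρ k)) =
        ρ k * (∑ ℓ, s ℓ) / (1 - ∑ ℓ, ρ ℓ) * lam j := by
      rw [hq1 k, hlamr k]
      have hrk := (hr k).1.ne'
      have hρk : (1 : ℝ) - ρ k ≠ 0 := by have := hρlt k; linarith
      have hmk := (hmupos k).ne'
      field_simp
    rw [hqkk]
    by_cases hj1 : j = k + 1
    · subst hj1
      rw [hq1 (k + 1), hq2 (k + 1) k hjk]
      have hv : (k + 1 - k).val = 1 := by
        rw [show k + 1 - k = 1 by ring]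
        have h1 : (1 : ZMod K) ≠ 0 := fun h => hjk (by linear_combination h)
        have : 1 < K := by
          by_contra hh
          interval_cases K
          · exact absurd rfl (NeZero.ne 0)
          · exact h1 (Subsingleton.elim _ _)
        exact ZMod.val_one_eq_one_mod K ▸ Nat.mod_eq_of_lt this
      rw [hv]
      simp only [sum_range_one, Nat.cast_zero, add_zero]
      field_simp
      ring
    · have hne2 : j ≠ k + 1 := hj1
      rw [hq2 j (k + 1) hne2, hq2 j k hjk]
      have hval : (j - (k + 1)).val = (j - k).val - 1 := by
        rw [show j - (k + 1) = (j - k) - 1 by ring, zmod_val_sub_one _ hjk']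
      rw [hval, sum_shift s k _ hv1, sum_shift ρ k _ hv1]
      field_simp
      ring
end

section
/- For the cyclic polling system under the binomial-exhaustive policy, the first-order buffer occupancy equations q_k(a_{k+1}) = s_k λ_k + (1−r_k)q_k(a_k) (polled queue) and q_j(a_{k+1}) = s_k λ_j + q_j(a_k) + q_k(a_k) r_k λ_j/(μ_k(1−ρ_k)) (j ≠ k), over k ∈ {1,…,K} with a_{K+1} := a_1, have at most one solution in ℝ^{K×K}, provided r_k ∈ (0,1] for all k, ρ_k ∈ (0,1), ∑ρ_k < 1, s_k ≥ 0 and ∑ s_k > 0. -/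
open Finset

/-- The first-order buffer occupancy equations for a cyclic polling system under the
binomial-exhaustive policy have at most one solution. -/
theorem stmt13 (K : ℕ) [NeZero K]
    (lam mu s r ρ : ZMod K → ℝ)
    (hlam : ∀ k, 0 < lam k) (hmu : ∀ k, 0 < mu k)
    (hρdef : ∀ k, ρ k = lam k / mu k)
    (hρk : ∀ k, 0 < ρ k ∧ ρ k < 1)
    (hr : ∀ k, 0 < r k ∧ r k ≤ 1)
    (hs : ∀ k, 0 ≤ s k) (hstot : 0 < ∑ k, s k)
    (hρtot : ∑ k, ρ k < 1)
    (q q' : ZMod K → ZMod K → ℝ)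
    (hq1 : ∀ k, q k (k + 1) = s k * lam k + (1 - r k) * q k k)
    (hq2 : ∀ j k, j ≠ k →
      q j (k + 1) = s k * lam j + q j k + q k k * r k * lam j / (mu k * (1 - ρ k)))
    (hq1' : ∀ k, q' k (k + 1) = s k * lam k + (1 - r k) * q' k k)
    (hq2' : ∀ j k, j ≠ k →
      q' j (k + 1) = s k * lam j + q' j k + q' k k * r k * lam j / (mu k * (1 - ρ k))) :
    q = q' := by
  set d : ZMod K → ZMod K → ℝ := fun j a => q j a - q' j a with hdd
  have hd1 : ∀ k, d k (k + 1) = (1 - r k) * d k k := by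
    intro k; simp only [hdd]; rw [hq1 k, hq1' k]; ring
  have hd2 : ∀ j k, j ≠ k →
      d j (k + 1) = d j k + d k k * (r k * lam j / (mu k * (1 - ρ k))) := by
    intro j k h; simp only [hdd]; rw [hq2 j k h, hq2' j k h]; ring
  have hmupos : ∀ k, (0:ℝ) < mu k * (1 - ρ k) :=
    fun k => mul_pos (hmu k) (by linarith [(hρk k).2])
  set S := ∑ k, ρ k with hS
  have hSk : ∀ k, ∑ j ∈ univ.erase k, ρ j = S - ρ k := by
    intro k
    have := Finset.sum_erase_add univ ρ (mem_univ k)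
    linarith [this]
  set N : ZMod K → ℝ := fun a => ∑ j, |d j a| / mu j with hN
  have key : ∀ k, N (k + 1) + |d k k| * (r k * (1 - S) / (mu k * (1 - ρ k))) ≤ N k := by
    intro k
    have hsplit : ∀ a, N a = (∑ j ∈ univ.erase k, |d j a| / mu j) + |d k a| / mu k := by
      intro a; simp only [hN]
      rw [← Finset.sum_erase_add univ _ (mem_univ k)]
    rw [hsplit (k+1), hsplit k]
    have h1 : |d k (k + 1)| / mu k = (1 - r k) * |d k k| / mu k := by
      rw [hd1 k, abs_mul, abs_of_nonneg (by linarith [(hr k).2] : (0:ℝ) ≤ 1 - r k)]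
    have h2 : ∑ j ∈ univ.erase k, |d j (k + 1)| / mu j ≤
        (∑ j ∈ univ.erase k, |d j k| / mu j)
          + |d k k| * (r k * (S - ρ k) / (mu k * (1 - ρ k))) := by
      have hb : ∀ j ∈ univ.erase k, |d j (k + 1)| / mu j ≤
          |d j k| / mu j + |d k k| * (r k * ρ j / (mu k * (1 - ρ k))) := by
        intro j hj
        have hjk : j ≠ k := (Finset.mem_erase.mp hj).1
        have hcpos : (0:ℝ) < r k * lam j / (mu k * (1 - ρ k)) :=
          div_pos (mul_pos (hr k).1 (hlam j)) (hmupos k)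
        have habs : |d j (k + 1)| ≤ |d j k| + |d k k| * (r k * lam j / (mu k * (1 - ρ k))) := by
          rw [hd2 j k hjk]
          calc |d j k + d k k * (r k * lam j / (mu k * (1 - ρ k)))|
              ≤ |d j k| + |d k k * (r k * lam j / (mu k * (1 - ρ k)))| := abs_add_le _ _
            _ = |d j k| + |d k k| * (r k * lam j / (mu k * (1 - ρ k))) := by
                rw [abs_mul, abs_of_nonneg hcpos.le]
        have h3 : |d j k| / mu j + |d k k| * (r k * ρ j / (mu k * (1 - ρ k)))
            = (|d j k| + |d k k| * (r k * lam j / (mu k * (1 - ρ k)))) / mu j := by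
          rw [hρdef j]
          have hj0 : mu j ≠ 0 := (hmu j).ne'
          have hk0 : mu k ≠ 0 := (hmu k).ne'
          have hk1 : (1:ℝ) - ρ k ≠ 0 := by have := (hρk k).2; intro h; linarith
          field_simp
        rw [h3]
        gcongr
        exact (hmu j).le
      calc ∑ j ∈ univ.erase k, |d j (k + 1)| / mu j
          ≤ ∑ j ∈ univ.erase k, (|d j k| / mu j + |d k k| * (r k * ρ j / (mu k * (1 - ρ k)))) :=
            Finset.sum_le_sum hb
        _ = (∑ j ∈ univ.erase k, |d j k| / mu j)
              + |d k k| * (r k * (S - ρ k) / (mu k * (1 - ρ k))) := by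
            rw [Finset.sum_add_distrib]
            congr 1
            have hrw : ∀ j, |d k k| * (r k * ρ j / (mu k * (1 - ρ k)))
                = (|d k k| * r k / (mu k * (1 - ρ k))) * ρ j := fun j => by ring
            simp only [hrw]
            rw [← Finset.mul_sum, hSk k]
            ring
    have hk0 : mu k ≠ 0 := (hmu k).ne'
    have hk1 : (1:ℝ) - ρ k ≠ 0 := by have := (hρk k).2; intro h; linarith
    have heq : (1 - r k) * |d k k| / mu k + |d k k| * (r k * (S - ρ k) / (mu k * (1 - ρ k)))
        + |d k k| * (r k * (1 - S) / (mu k * (1 - ρ k))) = |d k k| / mu k := by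
      field_simp
      ring
    linarith [h1, h2, heq]
  -- sum the key inequality over a full cycle
  have hsum : ∑ k, N (k + 1) = ∑ k, N k :=
    Fintype.sum_equiv (Equiv.addRight (1 : ZMod K)) _ _ (fun k => rfl)
  have hterm_nonneg : ∀ k, 0 ≤ |d k k| * (r k * (1 - S) / (mu k * (1 - ρ k))) := by
    intro k
    have : (0:ℝ) < r k * (1 - S) / (mu k * (1 - ρ k)) :=
      div_pos (mul_pos (hr k).1 (by linarith)) (hmupos k)
    exact mul_nonneg (abs_nonneg _) this.le
  have hsum_le : ∑ k, (N (k + 1) + |d k k| * (r k * (1 - S) / (mu k * (1 - ρ k))))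
      ≤ ∑ k, N k := Finset.sum_le_sum (fun k _ => key k)
  rw [Finset.sum_add_distrib, hsum] at hsum_le
  have hsum0 : ∑ k, |d k k| * (r k * (1 - S) / (mu k * (1 - ρ k))) = 0 := by
    have h0 : (0:ℝ) ≤ ∑ k, |d k k| * (r k * (1 - S) / (mu k * (1 - ρ k))) :=
      Finset.sum_nonneg (fun k _ => hterm_nonneg k)
    linarith
  have hdiag : ∀ k, d k k = 0 := by
    intro k
    have := (Finset.sum_eq_zero_iff_of_nonneg (fun k _ => hterm_nonneg k)).mp hsum0 k (mem_univ k)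
    have hc : (0:ℝ) < r k * (1 - S) / (mu k * (1 - ρ k)) :=
      div_pos (mul_pos (hr k).1 (by linarith)) (hmupos k)
    have habs : |d k k| = 0 := by
      rcases mul_eq_zero.mp this with h | h
      · exact h
      · exact absurd h hc.ne'
    exact abs_eq_zero.mp habs
  -- now propagate zero around the cycle
  have hstep : ∀ j k, d j (k + 1) = d j k ∨ d j (k + 1) = 0 := by
    intro j k
    by_cases h : j = k
    · right; subst h; rw [hd1 j, hdiag j]; ring
    · left; rw [hd2 j k h, hdiag k]; ring
  have hiter : ∀ (n : ℕ) (j : ZMod K), d j (j + (n + 1 : ℕ)) = 0 := by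
    intro n j
    induction n with
    | zero => simpa using by rw [hd1 j, hdiag j]; ring
    | succ m ih =>
      have hcast : (j + ((m + 2 : ℕ) : ZMod K)) = (j + ((m + 1 : ℕ) : ZMod K)) + 1 := by
        push_cast; ring
      rw [hcast]
      rcases hstep j (j + ((m + 1 : ℕ) : ZMod K)) with h | h
      · rw [h]; exact ih
      · exact h
  have hall : ∀ j a, d j a = 0 := by
    intro j a
    have hK : 0 < K := Nat.pos_of_ne_zero (NeZero.ne K)
    have hn : ((((a - j).val + K - 1 : ℕ) + 1 : ℕ) : ZMod K) = a - j := by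
      have : ((a - j).val + K - 1) + 1 = (a - j).val + K := by omega
      rw [this]
      push_cast
      simp [ZMod.natCast_val, ZMod.natCast_self]
    have := hiter ((a - j).val + K - 1) j
    rw [hn] at this
    simpa using this
  funext j a
  have := hall j a
  simp only [hdd] at this
  linarith
end

section
/- Summing the cyclic first-order buffer occupancy equations around one full cycle yields r_k q_k(a_k) = λ_k s + λ_k ∑_{ℓ≠k} q_ℓ(a_ℓ) r_ℓ /(μ_ℓ − λ_ℓ), for every k, where s = ∑_ℓ s_ℓ; consequently, any solution satisfies q_k(a_k) = λ_k(1−ρ_k) s/(r_k(1−ρ)). -/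
open Finset

/-- Summing the cyclic first-order buffer occupancy equations around one full cycle:
r_k q_k(a_k) = λ_k s + λ_k ∑_{ℓ≠k} q_ℓ(a_ℓ) r_ℓ/(μ_ℓ − λ_ℓ), and consequently
q_k(a_k) = λ_k (1 − ρ_k) s / (r_k (1 − ρ)). -/
theorem stmt14 (K : ℕ) [NeZero K]
    (lam mu s r ρ : ZMod K → ℝ)
    (hlam : ∀ k, 0 < lam k) (hmu : ∀ k, lam k < mu k)
    (hρdef : ∀ k, ρ k = lam k / mu k)
    (hr : ∀ k, 0 < r k ∧ r k ≤ 1)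
    (hs : ∀ k, 0 ≤ s k) (hstot : 0 < ∑ k, s k)
    (hρtot : ∑ k, ρ k < 1)
    (q : ZMod K → ZMod K → ℝ)
    (hq1 : ∀ k, q k (k + 1) = s k * lam k + (1 - r k) * q k k)
    (hq2 : ∀ j k, j ≠ k →
      q j (k + 1) = s k * lam j + q j k + q k k * r k * lam j / (mu k * (1 - ρ k))) :
    (∀ k, r k * q k k =
        lam k * (∑ ℓ, s ℓ)
          + lam k * ∑ ℓ ∈ Finset.univ.erase k, q ℓ ℓ * r ℓ / (mu ℓ - lam ℓ)) ∧
    (∀ k, q k k = lam k * (1 - ρ k) * (∑ ℓ, s ℓ) / (r k * (1 - ∑ ℓ, ρ ℓ))) := by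
  have hmu0 : ∀ k, 0 < mu k := fun k => (hlam k).trans (hmu k)
  have hml : ∀ k, 0 < mu k - lam k := fun k => sub_pos.2 (hmu k)
  have hdenom : ∀ k, mu k * (1 - ρ k) = mu k - lam k := by
    intro k
    rw [hρdef k, mul_sub, mul_one, mul_div_cancel₀ _ (hmu0 k).ne']
  have claim1 : ∀ k, r k * q k k =
      lam k * (∑ ℓ, s ℓ)
        + lam k * ∑ ℓ ∈ Finset.univ.erase k, q ℓ ℓ * r ℓ / (mu ℓ - lam ℓ) := by
    intro j
    have hsum : ∑ k, q j (k + 1) = ∑ k, q j k :=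
      Fintype.sum_equiv (Equiv.addRight 1) _ _ (fun k => rfl)
    have h0 : ∑ k, (q j (k + 1) - q j k) = 0 := by
      rw [Finset.sum_sub_distrib, hsum, sub_self]
    rw [← Finset.add_sum_erase Finset.univ _ (Finset.mem_univ j)] at h0
    rw [hq1 j] at h0
    have herase : ∑ k ∈ Finset.univ.erase j, (q j (k + 1) - q j k)
        = (∑ ℓ ∈ Finset.univ.erase j, s ℓ) * lam j
          + lam j * ∑ ℓ ∈ Finset.univ.erase j, q ℓ ℓ * r ℓ / (mu ℓ - lam ℓ) := by
      rw [Finset.sum_mul, Finset.mul_sum, ← Finset.sum_add_distrib]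
      refine Finset.sum_congr rfl fun k hk => ?_
      have hjk : j ≠ k := fun h => (Finset.mem_erase.1 hk).1 h.symm
      rw [hq2 j k hjk, hdenom k]
      have hne : (mu k - lam k) ≠ 0 := (hml k).ne'
      field_simp
      ring
    rw [herase] at h0
    have hS : (∑ ℓ, s ℓ) = s j + ∑ ℓ ∈ Finset.univ.erase j, s ℓ :=
      (Finset.add_sum_erase Finset.univ s (Finset.mem_univ j)).symm
    rw [hS]
    linarith [h0]
  refine ⟨claim1, ?_⟩
  set S := ∑ ℓ, s ℓ with hSdef
  set T := ∑ ℓ, q ℓ ℓ * r ℓ / (mu ℓ - lam ℓ) with hTdef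
  have hTerase : ∀ k, (∑ ℓ ∈ Finset.univ.erase k, q ℓ ℓ * r ℓ / (mu ℓ - lam ℓ))
      = T - q k k * r k / (mu k - lam k) := by
    intro k
    rw [hTdef, ← Finset.add_sum_erase Finset.univ _ (Finset.mem_univ k)]
    ring
  have key : ∀ k, q k k * r k / (mu k - lam k) = ρ k * (S + T) := by
    intro k
    have h1 := claim1 k
    rw [hTerase k] at h1
    have hk := (hml k).ne'
    have hmuk := (hmu0 k).ne'
    rw [hρdef k]
    field_simp at h1 ⊢
    nlinarith [h1]
  have hTsum : T = (∑ ℓ, ρ ℓ) * (S + T) := by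
    rw [hTdef, Finset.sum_mul]
    exact Finset.sum_congr rfl fun k _ => key k
  set P := ∑ ℓ, ρ ℓ with hPdef
  have hP1 : (0:ℝ) < 1 - P := by linarith
  have hA : S + T = S / (1 - P) := by
    field_simp
    linarith [hTsum]
  intro k
  have h := key k
  rw [hA] at h
  have hrk := (hr k).1
  have hk := hml k
  have hmuk := hmu0 k
  rw [hρdef k] at h ⊢
  field_simp at h ⊢
  nlinarith [h]
end
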